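/- Let $I \subseteq (0,1]$ with $1 \in I$. Then $I$ satisfies the descending chain condition (every non-increasing sequence in $I$ is eventually constant) if and only if $D(I)$ satisfies the descending chain condition. -/

import Mathlib

/-!
A set of reals satisfies DCC iff it is well-founded. The finite sums of a well-founded set of
nonnegative reals are again well-founded (Higman's lemma, `Set.IsPWO.addSubmonoid_closure`), so
`Iplus I` is well-founded. Below any level `a < 1`, only the finitely many denominators
`m ≤ 1 / (1 - a)` contribute to `DD I`, each through the monotone image of `Iplus I` under
`f ↦ (m - 1)/m + f/m`; hence `DD I` is well-founded. Conversely `I ⊆ DD I ∪ {1}`.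
-/

/-- `Iplus I` : the set of all finite (nonempty) sums of elements of `I`
that are less than one. -/
def Iplus (I : Set ℝ) : Set ℝ :=
  {x | ∃ l : List ℝ, l ≠ [] ∧ (∀ y ∈ l, y ∈ I) ∧ l.sum = x ∧ x < 1}

/-- `DD I` : the set of `a ≤ 1` of the form `(m-1)/m + f/m` with `m` a
positive integer and `f ∈ Iplus I`. -/
def DD (I : Set ℝ) : Set ℝ :=
  {a | a ≤ 1 ∧ ∃ m : ℕ, 0 < m ∧ ∃ f ∈ Iplus I, a = ((m : ℝ) - 1) / m + f / m}

/-- A set of reals satisfies DCC if it contains no infinite strictly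
decreasing sequence. -/
def DCC (S : Set ℝ) : Prop := ¬ ∃ f : ℕ → ℝ, (∀ n, f n ∈ S) ∧ StrictAnti f

/-- A set of reals satisfies ACC if it contains no infinite strictly
increasing sequence. -/
def ACC (S : Set ℝ) : Prop := ¬ ∃ f : ℕ → ℝ, (∀ n, f n ∈ S) ∧ StrictMono f

open Set

lemma dcc_iff_isWF (S : Set ℝ) : DCC S ↔ S.IsWF := by
  simp only [DCC, isWF_iff_no_descending_seq, not_exists, not_and]
  exact forall_congr' fun _ => imp_not_comm

theorem Set.IsWF.of_inter_Iic {α : Type*} [Preorder α] {s : Set α}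
    (h : ∀ a ∈ s, (s ∩ Iic a).IsWF) : s.IsWF := by
  rw [isWF_iff_no_descending_seq]
  intro f hf hs
  exact isWF_iff_no_descending_seq.mp (h _ (hs 0)) f hf
    fun n => ⟨hs n, hf.antitone n.zero_le⟩

lemma Iplus_subset_closure (I : Set ℝ) : Iplus I ⊆ AddSubmonoid.closure I := by
  rintro _ ⟨l, -, hl, rfl, -⟩
  exact list_sum_mem fun y hy => AddSubmonoid.subset_closure (hl y hy)

lemma nonneg_of_mem_Iplus {I : Set ℝ} (hI : I ⊆ Ici 0) {f : ℝ} (hf : f ∈ Iplus I) : 0 ≤ f := by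
  obtain ⟨l, -, hl, rfl, -⟩ := hf
  exact List.sum_nonneg fun y hy => hI (hl y hy)

lemma isWF_Iplus {I : Set ℝ} (hI : I ⊆ Ici 0) (hwf : I.IsWF) : (Iplus I).IsWF :=
  ((hwf.isPWO.addSubmonoid_closure fun _ hx => hI hx).isWF).mono (Iplus_subset_closure I)

lemma lt_one_of_mem_DD {I : Set ℝ} {a : ℝ} (ha : a ∈ DD I) : a < 1 := by
  obtain ⟨-, m, hm, f, ⟨-, -, -, -, hf⟩, rfl⟩ := ha
  have hm' : (0 : ℝ) < m := Nat.cast_pos.mpr hm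
  rw [← add_div, div_lt_one hm']
  linarith

noncomputable def ddMap (m : ℕ) (f : ℝ) : ℝ := ((m : ℝ) - 1) / m + f / m

lemma monotone_ddMap (m : ℕ) : Monotone (ddMap m) := fun _ _ h => by
  unfold ddMap
  gcongr

lemma DD_inter_Iic_subset {I : Set ℝ} (hI : I ⊆ Ici 0) {a : ℝ} (ha : a < 1) :
    DD I ∩ Iic a ⊆ ⋃ m ∈ Finset.range (⌊1 / (1 - a)⌋₊ + 1), ddMap m '' Iplus I := by
  rintro _ ⟨⟨-, m, hm, f, hf, rfl⟩, hle⟩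
  refine mem_biUnion (Finset.mem_coe.mpr (Finset.mem_range_succ_iff.mpr ?_)) ⟨f, hf, rfl⟩
  have hm' : (0 : ℝ) < m := Nat.cast_pos.mpr hm
  have h0 := nonneg_of_mem_Iplus hI hf
  -- `(m - 1)/m ≤ ddMap m f ≤ a` forces `m ≤ 1 / (1 - a)`
  apply Nat.le_floor
  rw [le_div_iff₀ (by linarith)]
  have : ((m : ℝ) - 1) / m ≤ a := le_trans (le_add_of_nonneg_right (div_nonneg h0 hm'.le)) hle
  rw [div_le_iff₀ hm'] at this
  linarith

lemma isWF_DD {I : Set ℝ} (hI : I ⊆ Ici 0) (hwf : I.IsWF) : (DD I).IsWF := by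
  refine IsWF.of_inter_Iic fun a ha => IsWF.mono ?_ (DD_inter_Iic_subset hI (lt_one_of_mem_DD ha))
  rw [← Finset.sup_set_eq_biUnion, Finset.isWF_sup]
  exact fun m _ => ((isWF_Iplus hI hwf).isPWO.image_of_monotone (monotone_ddMap m)).isWF

lemma subset_insert_one_DD {I : Set ℝ} (hI : I ⊆ Iic 1) : I ⊆ insert 1 (DD I) := by
  intro x hx
  rcases (show x ≤ 1 from hI hx).eq_or_lt with rfl | hlt
  · exact mem_insert _ _
  · refine Or.inr ⟨hlt.le, 1, one_pos, x, ⟨[x], by simp, by simpa, by simp, hlt⟩, by simp⟩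

theorem DCC_iff_DCC_DD_general (I : Set ℝ) (hI : I ⊆ Set.Ioc 0 1) :
    DCC I ↔ DCC (DD I) := by
  rw [dcc_iff_isWF, dcc_iff_isWF]
  exact ⟨isWF_DD fun _ hx => (hI hx).1.le,
    fun h => (h.insert 1).mono (subset_insert_one_DD (hI.trans Ioc_subset_Iic_self))⟩

/-- Lemma 4.4(3): `I` satisfies DCC iff `D(I)` satisfies DCC. -/
theorem DCC_iff_DCC_DD (I : Set ℝ) (hI : I ⊆ Set.Ioc 0 1) (h1 : (1 : ℝ) ∈ I) :
    DCC I ↔ DCC (DD I) :=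
  DCC_iff_DCC_DD_general I hI
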